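/- (Monotone likelihood ratio of symmetric two-point Gaussian mixtures.) Let φ(x) = (2π)^{-1/2} exp(-x²/2) denote the standard normal density and let 0 ≤ μ₁ ≤ μ₂. Then the ratio z ↦ (φ(z - μ₂) + φ(z + μ₂)) / (φ(z - μ₁) + φ(z + μ₁)) is non-decreasing on [0, ∞) and non-increasing on (-∞, 0]. -/

import Mathlib

noncomputable section

/-- The standard normal density `φ(x) = (2π)^{-1/2} exp(-x²/2)`. -/
def stdNormal (x : ℝ) : ℝ := (Real.sqrt (2 * Real.pi))⁻¹ * Real.exp (-(x ^ 2) / 2)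

end

/-!
Completing the square gives `φ(z - μ) + φ(z + μ) = 2 φ(z) e^{-μ²/2} cosh (μ z)`, so the ratio is a
positive constant times `cosh (μ₂ z) / cosh (μ₁ z)`, an even function. For `0 ≤ a ≤ b` the
product-to-sum formula reduces `cosh (μ₂ a) cosh (μ₁ b) ≤ cosh (μ₂ b) cosh (μ₁ a)` to the two
comparisons `|μ₂ a ± μ₁ b| ≤ |μ₂ b ± μ₁ a|`, since `cosh` is monotone in `|x|`.
-/

open Real Set

theorem antitoneOn_Iic_of_even_of_monotoneOn_Ici {G H : Type*} [AddCommGroup G] [PartialOrder G]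
    [IsOrderedAddMonoid G] [Preorder H] {f : G → H} (hf : Function.Even f)
    (h : MonotoneOn f (Ici 0)) : AntitoneOn f (Iic 0) := fun x hx y hy hxy => by
  rw [← hf x, ← hf y]
  exact h (neg_nonneg.2 hy) (neg_nonneg.2 hx) (neg_le_neg hxy)

namespace Real

theorem cosh_mul_cosh (x y : ℝ) : cosh x * cosh y = (cosh (x + y) + cosh (x - y)) / 2 := by
  rw [cosh_add, cosh_sub]
  ring

theorem cosh_mul_mul_cosh_mul_le {s t a b : ℝ} (hs : 0 ≤ s) (hst : s ≤ t) (ha : 0 ≤ a)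
    (hab : a ≤ b) : cosh (t * a) * cosh (s * b) ≤ cosh (t * b) * cosh (s * a) := by
  have hsum : cosh (t * a + s * b) ≤ cosh (t * b + s * a) := by
    rw [cosh_le_cosh, abs_of_nonneg (by nlinarith), abs_of_nonneg (by nlinarith)]
    nlinarith
  have hdiff : cosh (t * a - s * b) ≤ cosh (t * b - s * a) := by
    rw [cosh_le_cosh]
    exact abs_le_abs (by nlinarith) (by nlinarith)
  rw [cosh_mul_cosh, cosh_mul_cosh]
  linarith

theorem monotoneOn_cosh_mul_div_cosh_mul {s t : ℝ} (hs : 0 ≤ s) (hst : s ≤ t) :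
    MonotoneOn (fun z => cosh (t * z) / cosh (s * z)) (Ici 0) := fun a ha _ _ hab => by
  rw [div_le_div_iff₀ (cosh_pos _) (cosh_pos _)]
  exact cosh_mul_mul_cosh_mul_le hs hst ha hab

end Real

theorem stdNormal_sub_add_stdNormal_add (z μ : ℝ) :
    stdNormal (z - μ) + stdNormal (z + μ) =
      2 * stdNormal z * exp (-(μ ^ 2) / 2) * cosh (μ * z) := by
  rw [stdNormal, stdNormal, stdNormal, cosh_eq,
    show -((z - μ) ^ 2) / 2 = -(z ^ 2) / 2 + -(μ ^ 2) / 2 + μ * z by ring,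
    show -((z + μ) ^ 2) / 2 = -(z ^ 2) / 2 + -(μ ^ 2) / 2 + -(μ * z) by ring,
    exp_add, exp_add, exp_add, exp_add]
  ring

theorem stdNormal_pos (x : ℝ) : 0 < stdNormal x := by
  unfold stdNormal
  positivity

theorem symmetric_mixture_ratio_eq (μ₁ μ₂ z : ℝ) :
    (stdNormal (z - μ₂) + stdNormal (z + μ₂)) / (stdNormal (z - μ₁) + stdNormal (z + μ₁)) =
      exp ((μ₁ ^ 2 - μ₂ ^ 2) / 2) * (cosh (μ₂ * z) / cosh (μ₁ * z)) := by
  rw [stdNormal_sub_add_stdNormal_add, stdNormal_sub_add_stdNormal_add,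
    show (μ₁ ^ 2 - μ₂ ^ 2) / 2 = -(μ₂ ^ 2) / 2 - -(μ₁ ^ 2) / 2 by ring, exp_sub]
  have := stdNormal_pos z
  field_simp

/-- **Monotone likelihood ratio of symmetric two-point Gaussian mixtures.**
For `0 ≤ μ₁ ≤ μ₂`, the ratio
`z ↦ (φ(z-μ₂) + φ(z+μ₂)) / (φ(z-μ₁) + φ(z+μ₁))` is non-decreasing on `[0, ∞)`
and non-increasing on `(-∞, 0]`. -/
theorem gaussian_symmetric_mixture_mlr (μ₁ μ₂ : ℝ) (h1 : 0 ≤ μ₁) (h12 : μ₁ ≤ μ₂) :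
    MonotoneOn (fun z => (stdNormal (z - μ₂) + stdNormal (z + μ₂)) /
      (stdNormal (z - μ₁) + stdNormal (z + μ₁))) (Set.Ici (0 : ℝ)) ∧
    AntitoneOn (fun z => (stdNormal (z - μ₂) + stdNormal (z + μ₂)) /
      (stdNormal (z - μ₁) + stdNormal (z + μ₁))) (Set.Iic (0 : ℝ)) := by
  simp_rw [symmetric_mixture_ratio_eq]
  set c := exp ((μ₁ ^ 2 - μ₂ ^ 2) / 2)
  have hmono : MonotoneOn (fun z => c * (cosh (μ₂ * z) / cosh (μ₁ * z))) (Ici 0) :=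
    fun a ha b hb hab =>
      mul_le_mul_of_nonneg_left (monotoneOn_cosh_mul_div_cosh_mul h1 h12 ha hb hab) (exp_pos _).le
  have heven : Function.Even fun z => c * (cosh (μ₂ * z) / cosh (μ₁ * z)) :=
    fun z => by simp only [mul_neg, cosh_neg]
  exact ⟨hmono, antitoneOn_Iic_of_even_of_monotoneOn_Ici heven hmono⟩
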